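/- arXiv:1405.1540 — 4 statements merged into one kernel-verified Lean document; each statement's English description precedes it below -/
import Mathlib

section
/- Let G be a unimodular locally compact group, U a compact open subgroup, and ω : G → ℂ a continuous U-biinvariant function with ω(e) = 1 (i.e. ω satisfies conditions (i) and (ii) of the definition of a spherical function). Then ω satisfies the functional equation ∫_U ω(g₁ u g₂) dμ(u) = ω(g₁)ω(g₂) for all g₁,g₂ ∈ G if and only if for each f ∈ ℋ(G,U) there exists λ_f ∈ ℂ such that f * ω = λ_f ω, where (f*ω)(g) = ∫_G f(h) ω(h⁻¹g) dμ(h). -/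
open MeasureTheory Complex ComplexOrder

noncomputable section

/-- A function `f : G → ℂ` is `U`-biinvariant. -/
def IsBiinvariant {G : Type*} [Group G] (U : Subgroup G) (f : G → ℂ) : Prop :=
  ∀ (g : G), ∀ u₁ ∈ U, ∀ u₂ ∈ U, f (u₁ * g * u₂) = f g

/-- Membership in the Hecke algebra `ℋ(G,U)`: compactly supported `U`-biinvariant functions. -/
def IsHeckeFun {G : Type*} [Group G] [TopologicalSpace G] (U : Subgroup G) (f : G → ℂ) : Prop :=
  HasCompactSupport f ∧ IsBiinvariant U f

/-- Convolution of two functions with respect to `μ`. -/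
def convFun {G : Type*} [Group G] [MeasurableSpace G] (μ : Measure G) (f₁ f₂ : G → ℂ) :
    G → ℂ :=
  fun g => ∫ h, f₁ h * f₂ (h⁻¹ * g) ∂μ

/-- The involution `f^*(g) = conj (f g⁻¹)`. -/
def starFun {G : Type*} [Group G] (f : G → ℂ) : G → ℂ :=
  fun g => (starRingEnd ℂ) (f g⁻¹)

/-- `(G,U)` is a Gelfand pair: the Hecke algebra is commutative. -/
def IsGelfandPair {G : Type*} [Group G] [TopologicalSpace G] [MeasurableSpace G]
    (μ : Measure G) (U : Subgroup G) : Prop :=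
  ∀ f₁ f₂ : G → ℂ, IsHeckeFun U f₁ → IsHeckeFun U f₂ → convFun μ f₁ f₂ = convFun μ f₂ f₁

/-- A spherical function for `(G,U)`. -/
def IsSpherical {G : Type*} [Group G] [TopologicalSpace G] [MeasurableSpace G]
    (μ : Measure G) (U : Subgroup G) (ω : G → ℂ) : Prop :=
  Continuous ω ∧ ω 1 = 1 ∧ IsBiinvariant U ω ∧
    ∀ g₁ g₂ : G, (∫ u in (U : Set G), ω (g₁ * u * g₂) ∂μ) = ω g₁ * ω g₂

/-- The character `τ_ω` associated to a spherical function `ω`. -/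
def tauOmega {G : Type*} [Group G] [MeasurableSpace G] (μ : Measure G) (ω : G → ℂ)
    (f : G → ℂ) : ℂ :=
  ∫ g, f g * ω g⁻¹ ∂μ

/-- A function `ω : G → ℂ` is positive definite. -/
def IsPosDefFun {G : Type*} [Group G] (ω : G → ℂ) : Prop :=
  ∀ (m : ℕ) (s : Fin m → G) (z : Fin m → ℂ),
    0 ≤ ∑ j : Fin m, ∑ k : Fin m, (starRingEnd ℂ) (z j) * z k * ω ((s j)⁻¹ * s k)


/-!
For a Hecke function `f`, left invariance of `μ` and of `f` under `U` give
`(f * ω)(g) = ∫ f(h) ω(h⁻¹ u g) dh` for every `u ∈ U`; averaging over `U` (of measure one) and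
swapping the integrals gives `(f * ω)(g) = ∫ f(h) (∫_U ω(h⁻¹ u g) du) dh`.
If the functional equation holds, the inner integral is `ω(h⁻¹) ω(g)`, so `f * ω = τ_ω(f) ω`.
Conversely, take `f` the characteristic function of the double coset `U g₁⁻¹ U`: the inner
integral is `U`-biinvariant in `h`, hence constant on `U g₁⁻¹ U`, and
`(f * ω)(g) = μ(U g₁⁻¹ U) ∫_U ω(g₁ u g) du`. Evaluating `f * ω = λ ω` at `g = 1` gives
`λ = μ(U g₁⁻¹ U) ω(g₁)`, and `μ(U g₁⁻¹ U) > 0` since the double coset is open.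
-/
open DoubleCoset

section Fubini

variable {X Y E : Type*} [TopologicalSpace X] [TopologicalSpace Y] [MeasurableSpace X]
  [MeasurableSpace Y] [OpensMeasurableSpace X] [OpensMeasurableSpace Y]
  [NormedAddCommGroup E] [NormedSpace ℝ E]
  {μ : Measure X} {ν : Measure Y} [IsFiniteMeasureOnCompacts μ] [IsFiniteMeasureOnCompacts ν]

theorem setIntegral_integral_swap_of_isClopen {s : Set X} (hs : IsClopen s) (hsc : IsCompact s)
    {K : Set Y} (hK : IsCompact K) (hKc : IsClosed K) {F : X → Y → E}
    (hF : Continuous F.uncurry) (hFK : ∀ x, ∀ y ∉ K, F x y = 0) :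
    ∫ x in s, ∫ y, F x y ∂ν ∂μ = ∫ y, ∫ x in s, F x y ∂μ ∂ν := by
  have hsm := hs.isOpen.measurableSet
  set Fs : X → Y → E := fun x y => s.indicator (F · y) x
  have hFs : Fs.uncurry = (s ×ˢ Set.univ).indicator F.uncurry := by
    ext ⟨x, y⟩
    by_cases hx : x ∈ s <;> simp [Fs, hx]
  have hcont : Continuous Fs.uncurry := hFs ▸ (hs.prod isClopen_univ).continuous_indicator hF
  have hsupp : HasCompactSupport Fs.uncurry := by
    refine HasCompactSupport.intro' (hsc.prod hK) (hs.isClosed.prod hKc) fun ⟨x, y⟩ hxy => ?_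
    rcases not_and_or.1 hxy with hx | hy
    · simp [Fs, hx]
    · simp [Fs, hFK x y hy]
  calc ∫ x in s, ∫ y, F x y ∂ν ∂μ = ∫ x, ∫ y, Fs x y ∂ν ∂μ := by
        rw [← integral_indicator hsm]
        congr 1 with x
        by_cases hx : x ∈ s <;> simp [Fs, hx]
    _ = ∫ y, ∫ x, Fs x y ∂μ ∂ν := integral_integral_swap_of_hasCompactSupport hcont hsupp
    _ = ∫ y, ∫ x in s, F x y ∂μ ∂ν := by simp only [Fs, integral_indicator hsm]

end Fubini

section Biinvariant

variable {G : Type*} [Group G] {U : Subgroup G} {f : G → ℂ}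

theorem IsBiinvariant.mul_left_eq (hf : IsBiinvariant U f) {u : G} (hu : u ∈ U) (g : G) :
    f (u * g) = f g := by
  simpa using hf g u hu 1 U.one_mem

theorem IsBiinvariant.mul_right_eq (hf : IsBiinvariant U f) {u : G} (hu : u ∈ U) (g : G) :
    f (g * u) = f g := by
  simpa using hf g 1 U.one_mem u hu

theorem IsBiinvariant.eq_of_mem_doubleCoset (hf : IsBiinvariant U f) {x y : G}
    (hy : y ∈ doubleCoset x U U) : f y = f x := by
  obtain ⟨u₁, hu₁, u₂, hu₂, rfl⟩ := mem_doubleCoset.1 hy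
  exact hf x u₁ hu₁ u₂ hu₂

theorem isBiinvariant_indicator_doubleCoset (x : G) :
    IsBiinvariant U ((doubleCoset x U U).indicator 1) := by
  have hmem {g : G} (hg : g ∈ doubleCoset x U U) {u₁ u₂ : G} (hu₁ : u₁ ∈ U) (hu₂ : u₂ ∈ U) :
      u₁ * g * u₂ ∈ doubleCoset x U U := by
    obtain ⟨v₁, hv₁, v₂, hv₂, rfl⟩ := mem_doubleCoset.1 hg
    exact mem_doubleCoset.2 ⟨u₁ * v₁, mul_mem hu₁ hv₁, v₂ * u₂, mul_mem hv₂ hu₂, by group⟩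
  intro g u₁ hu₁ u₂ hu₂
  have : u₁ * g * u₂ ∈ doubleCoset x U U ↔ g ∈ doubleCoset x U U :=
    ⟨fun h => by simpa [mul_assoc] using hmem h (inv_mem hu₁) (inv_mem hu₂),
      fun h => hmem h hu₁ hu₂⟩
  by_cases hg : g ∈ doubleCoset x U U <;> simp [hg, this]

theorem IsBiinvariant.continuous [TopologicalSpace G] [IsTopologicalGroup G]
    (hU : IsOpen (U : Set G)) (hf : IsBiinvariant U f) : Continuous f := by
  refine (IsLocallyConstant.iff_eventually_eq f |>.2 fun g => ?_).continuous
  rw [← map_mul_left_nhds_one g, Filter.eventually_map]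
  filter_upwards [hU.mem_nhds U.one_mem] with u hu using hf.mul_right_eq hu g

theorem isOpen_doubleCoset [TopologicalSpace G] [ContinuousMul G] (hU : IsOpen (U : Set G))
    (x : G) : IsOpen (doubleCoset x U U) :=
  hU.mul_left

theorem isCompact_doubleCoset [TopologicalSpace G] [ContinuousMul G] (hU : IsCompact (U : Set G))
    (x : G) : IsCompact (doubleCoset x U U) :=
  (hU.mul isCompact_singleton).mul hU

theorem isHeckeFun_indicator_doubleCoset [TopologicalSpace G] [IsTopologicalGroup G]
    (hU : IsCompact (U : Set G)) (x : G) : IsHeckeFun U ((doubleCoset x U U).indicator 1) :=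
  ⟨HasCompactSupport.intro (isCompact_doubleCoset hU x) fun _ hg => Set.indicator_of_notMem hg 1,
    isBiinvariant_indicator_doubleCoset x⟩

end Biinvariant

section Convolution

variable {G : Type*} [Group G] [MeasurableSpace G] {U : Subgroup G} (μ : Measure G)

theorem setIntegral_subgroup_mul_left [MeasurableMul G] [μ.IsMulLeftInvariant] {E : Type*}
    [NormedAddCommGroup E] [NormedSpace ℝ E] {u : G} (hu : u ∈ U) (F : G → E) :
    ∫ v in (U : Set G), F (u * v) ∂μ = ∫ v in (U : Set G), F v ∂μ := by
  have hpre : (u * ·) ⁻¹' (U : Set G) = U := Set.ext fun _ => U.mul_mem_cancel_left hu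
  simpa [hpre] using
    (measurePreserving_mul_left μ u).setIntegral_preimage_emb (measurableEmbedding_mulLeft u) F U

theorem integral_mul_inv_mul_eq_convFun [MeasurableMul G] [μ.IsMulLeftInvariant] {f ω : G → ℂ}
    (hf : ∀ u ∈ U, ∀ h, f (u * h) = f h) {u : G} (hu : u ∈ U) (g : G) :
    ∫ h, f h * ω (h⁻¹ * u * g) ∂μ = convFun μ f ω g := by
  rw [← integral_mul_left_eq_self _ u]
  simp only [hf u hu, mul_inv_rev, mul_assoc, inv_mul_cancel_left]
  rfl

theorem IsBiinvariant.setIntegral_mul_eq {ω : G → ℂ} (hω : IsBiinvariant U ω)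
    (hUm : MeasurableSet (U : Set G)) (hU1 : μ (U : Set G) = 1) (g : G) :
    ∫ u in (U : Set G), ω (g * u) ∂μ = ω g := by
  rw [setIntegral_congr_fun hUm fun u hu => hω.mul_right_eq hu g]
  simp [measureReal_def, hU1]

theorem isBiinvariant_setIntegral_inv_mul [MeasurableMul G] [μ.IsMulLeftInvariant] {ω : G → ℂ}
    (hω : ∀ u ∈ U, ∀ y, ω (u * y) = ω y) (g : G) :
    IsBiinvariant U fun h => ∫ u in (U : Set G), ω (h⁻¹ * u * g) ∂μ := by
  intro h u₁ hu₁ u₂ hu₂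
  calc ∫ u in (U : Set G), ω ((u₁ * h * u₂)⁻¹ * u * g) ∂μ
      = ∫ u in (U : Set G), ω (h⁻¹ * (u₁⁻¹ * u) * g) ∂μ := by
        congr 1 with u
        rw [show (u₁ * h * u₂)⁻¹ * u * g = u₂⁻¹ * (h⁻¹ * (u₁⁻¹ * u) * g) by group,
          hω _ (inv_mem hu₂)]
    _ = ∫ u in (U : Set G), ω (h⁻¹ * u * g) ∂μ :=
        setIntegral_subgroup_mul_left μ (inv_mem hu₁) fun v => ω (h⁻¹ * v * g)

variable [TopologicalSpace G] [IsTopologicalGroup G]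

theorem measureReal_doubleCoset_pos [μ.IsOpenPosMeasure] [IsFiniteMeasureOnCompacts μ]
    (hUcomp : IsCompact (U : Set G)) (hUopen : IsOpen (U : Set G)) (x : G) :
    0 < μ.real (doubleCoset x U U) :=
  ENNReal.toReal_pos
    ((isOpen_doubleCoset hUopen x).measure_pos μ ⟨x, mem_doubleCoset_self U U x⟩).ne'
    (isCompact_doubleCoset hUcomp x).measure_lt_top.ne

variable [BorelSpace G] [μ.IsMulLeftInvariant] [IsFiniteMeasureOnCompacts μ]

theorem convFun_eq_integral_mul_setIntegral (hUcomp : IsCompact (U : Set G))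
    (hUopen : IsOpen (U : Set G)) (hU1 : μ (U : Set G) = 1) {f ω : G → ℂ} (hf : IsHeckeFun U f)
    (hω : Continuous ω) (g : G) :
    convFun μ f ω g = ∫ h, f h * ∫ u in (U : Set G), ω (h⁻¹ * u * g) ∂μ ∂μ := by
  have hfc : Continuous f := hf.2.continuous hUopen
  calc convFun μ f ω g = ∫ _ in (U : Set G), convFun μ f ω g ∂μ := by simp [measureReal_def, hU1]
    _ = ∫ u in (U : Set G), ∫ h, f h * ω (h⁻¹ * u * g) ∂μ ∂μ :=
        setIntegral_congr_fun hUopen.measurableSet fun u hu =>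
          (integral_mul_inv_mul_eq_convFun μ (fun v hv => hf.2.mul_left_eq hv) hu g).symm
    _ = ∫ h, ∫ u in (U : Set G), f h * ω (h⁻¹ * u * g) ∂μ ∂μ :=
        setIntegral_integral_swap_of_isClopen ⟨U.isClosed_of_isOpen hUopen, hUopen⟩ hUcomp hf.1
          (isClosed_tsupport f) (by fun_prop)
          fun _ _ hh => by simp [image_eq_zero_of_notMem_tsupport hh]
    _ = ∫ h, f h * ∫ u in (U : Set G), ω (h⁻¹ * u * g) ∂μ ∂μ := by simp only [integral_const_mul]

theorem convFun_indicator_doubleCoset (hUcomp : IsCompact (U : Set G))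
    (hUopen : IsOpen (U : Set G)) (hU1 : μ (U : Set G) = 1) {ω : G → ℂ} (hω : Continuous ω)
    (hω_left : ∀ u ∈ U, ∀ y, ω (u * y) = ω y) (x g : G) :
    convFun μ ((doubleCoset x U U).indicator 1) ω g =
      μ.real (doubleCoset x U U) * ∫ u in (U : Set G), ω (x⁻¹ * u * g) ∂μ := by
  have hA := isBiinvariant_setIntegral_inv_mul μ hω_left g
  rw [convFun_eq_integral_mul_setIntegral μ hUcomp hUopen hU1
    (isHeckeFun_indicator_doubleCoset hUcomp x) hω, ← Complex.real_smul,
    ← integral_indicator_const _ (isOpen_doubleCoset hUopen x).measurableSet]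
  congr 1 with h
  by_cases hh : h ∈ doubleCoset x U U
  · simp [hh, hA.eq_of_mem_doubleCoset hh]
  · simp [hh]

theorem convFun_eq_tauOmega_mul (hUcomp : IsCompact (U : Set G)) (hUopen : IsOpen (U : Set G))
    (hU1 : μ (U : Set G) = 1) {ω : G → ℂ} (hω : Continuous ω)
    (hfe : ∀ g₁ g₂ : G, ∫ u in (U : Set G), ω (g₁ * u * g₂) ∂μ = ω g₁ * ω g₂) {f : G → ℂ}
    (hf : IsHeckeFun U f) : convFun μ f ω = fun g => tauOmega μ ω f * ω g := by
  funext g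
  simp only [convFun_eq_integral_mul_setIntegral μ hUcomp hUopen hU1 hf hω, hfe, ← mul_assoc,
    integral_mul_const, tauOmega]

end Convolution

theorem spherical_functional_equation_iff_eigenfunction_general {G : Type*} [Group G]
    [TopologicalSpace G] [IsTopologicalGroup G]
    [MeasurableSpace G] [BorelSpace G]
    (U : Subgroup G) (hUcomp : IsCompact (U : Set G)) (hUopen : IsOpen (U : Set G))
    (μ : Measure G) [μ.IsHaarMeasure] (hU1 : μ (U : Set G) = 1)
    (ω : G → ℂ) (hcont : Continuous ω) (hone : ω 1 = 1) (hbi : IsBiinvariant U ω) :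
    (∀ g₁ g₂ : G, (∫ u in (U : Set G), ω (g₁ * u * g₂) ∂μ) = ω g₁ * ω g₂) ↔
      ∀ f : G → ℂ, IsHeckeFun U f → ∃ lam : ℂ, convFun μ f ω = fun g => lam * ω g := by
  refine ⟨fun hfe f hf => ⟨_, convFun_eq_tauOmega_mul μ hUcomp hUopen hU1 hcont hfe hf⟩,
    fun heig g₁ g₂ => ?_⟩
  obtain ⟨lam, hlam⟩ := heig _ (isHeckeFun_indicator_doubleCoset hUcomp g₁⁻¹)
  have hconv (g : G) : lam * ω g =
      μ.real (doubleCoset g₁⁻¹ U U) * ∫ u in (U : Set G), ω (g₁ * u * g) ∂μ := by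
    simpa [hlam] using convFun_indicator_doubleCoset μ hUcomp hUopen hU1 hcont
      (fun u hu => hbi.mul_left_eq hu) g₁⁻¹ g
  have hlam_eq : lam = μ.real (doubleCoset g₁⁻¹ U U) * ω g₁ := by
    simpa [hone, hbi.setIntegral_mul_eq μ hUopen.measurableSet hU1] using hconv 1
  refine mul_left_cancel₀
    (Complex.ofReal_ne_zero.2 (measureReal_doubleCoset_pos μ hUcomp hUopen g₁⁻¹).ne') ?_
  rw [← hconv, hlam_eq, mul_assoc]

/-- For a continuous `U`-biinvariant `ω` with `ω(e) = 1`, the spherical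
functional equation holds if and only if `ω` is a common eigenfunction of the Hecke algebra
under convolution: for each `f ∈ ℋ(G,U)` there is `λ_f ∈ ℂ` with `f * ω = λ_f ω`. -/
theorem spherical_functional_equation_iff_eigenfunction {G : Type*} [Group G]
    [TopologicalSpace G] [IsTopologicalGroup G] [LocallyCompactSpace G] [T2Space G]
    [MeasurableSpace G] [BorelSpace G]
    (U : Subgroup G) (hUcomp : IsCompact (U : Set G)) (hUopen : IsOpen (U : Set G))
    (μ : Measure G) [μ.IsHaarMeasure] [μ.IsMulRightInvariant] (hU1 : μ (U : Set G) = 1)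
    (ω : G → ℂ) (hcont : Continuous ω) (hone : ω 1 = 1) (hbi : IsBiinvariant U ω) :
    (∀ g₁ g₂ : G, (∫ u in (U : Set G), ω (g₁ * u * g₂) ∂μ) = ω g₁ * ω g₂) ↔
      ∀ f : G → ℂ, IsHeckeFun U f → ∃ lam : ℂ, convFun μ f ω = fun g => lam * ω g :=
  spherical_functional_equation_iff_eigenfunction_general U hUcomp hUopen μ hU1 ω hcont hone hbi
end
end

section
/- Let (G,U) be a Gelfand pair and ω a *-spherical function for (G,U). Then ω is positive definite if and only if τ_ω(f^* * f) ≥ 0 for every compactly supported right-U-invariant function f : G → ℂ (i.e. f(gu) = f(g) for all g ∈ G, u ∈ U), where f^*(g) = conj(f(g⁻¹)), (f^* * f)(g) = ∫_G f^*(h) f(h⁻¹g) dμ(h) ∈ ℋ(G,U), and τ_ω(h) = ∫_G h(g) ω(g⁻¹) dμ(g). (This is the content, at the level of functions, of the equivalence between positive definiteness of bounded *-spherical functions and injectivity of the canonical surjection C*(L¹(G,U)) → p₀C*(G)p₀.) -/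
open MeasureTheory Complex ComplexOrder

noncomputable section

/-!
A compactly supported right-`U`-invariant function is a finite combination
`f = ∑ₖ cₖ 𝟙_{sₖU}` of indicators of left cosets: `U` is open, so `G ⧸ U` is discrete and the
compact support of `f` meets only finitely many cosets. Unfolding `τ_ω(f^* * f)` by Fubini and
left invariance, and using that the `U`-biinvariant `ω` is constant, equal to `ω(b⁻¹a)`, on
`(bU)⁻¹(aU)`, one finds
`τ_ω(f^* * f) = μ(U)² ∑ⱼ ∑ₖ cⱼ conj(cₖ) ω(sⱼ⁻¹sₖ)`
(right invariance enters through `∫ 𝟙_{aU}(h⁻¹) dh = μ(U)`). This is `μ(U)² > 0` times the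
positive-definiteness form of `ω` at the points `sₖ` with coefficients `conj(cₖ)`.
-/

open scoped Pointwise ComplexConjugate

section General

variable {G : Type*} [Group G] [TopologicalSpace G] [IsTopologicalGroup G]

lemma Continuous.starFun {f : G → ℂ} (hf : Continuous f) : Continuous (starFun f) := by
  unfold _root_.starFun
  fun_prop

lemma HasCompactSupport.starFun {f : G → ℂ} (hf : HasCompactSupport f) :
    HasCompactSupport (starFun f) :=
  (hf.comp_homeomorph (Homeomorph.inv G)).comp_left (map_zero _)

variable [MeasurableSpace G] [BorelSpace G] {μ : Measure G} [IsFiniteMeasureOnCompacts μ]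
  [μ.IsMulLeftInvariant]

lemma tauOmega_convFun_eq_integral {f₁ f₂ ω : G → ℂ} (hf₁ : Continuous f₁) (hf₂ : Continuous f₂)
    (hω : Continuous ω) (hf₁c : HasCompactSupport f₁) (hf₂c : HasCompactSupport f₂) :
    tauOmega μ ω (convFun μ f₁ f₂) = ∫ h, f₁ h * ∫ x, f₂ x * ω (x⁻¹ * h⁻¹) ∂μ ∂μ := by
  have hcont : Continuous (Function.uncurry fun g h => f₁ h * f₂ (h⁻¹ * g) * ω g⁻¹) := by
    change Continuous fun p : G × G => f₁ p.2 * f₂ (p.2⁻¹ * p.1) * ω p.1⁻¹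
    fun_prop
  have hsupp : HasCompactSupport (Function.uncurry fun g h => f₁ h * f₂ (h⁻¹ * g) * ω g⁻¹) := by
    refine HasCompactSupport.intro ((hf₁c.isCompact.mul hf₂c.isCompact).prod hf₁c.isCompact) ?_
    rintro ⟨g, h⟩ hgh
    by_cases h₁ : h ∈ tsupport f₁
    · by_cases h₂ : h⁻¹ * g ∈ tsupport f₂
      · exact absurd ⟨by simpa using Set.mul_mem_mul h₁ h₂, h₁⟩ hgh
      · simp [image_eq_zero_of_notMem_tsupport h₂]
    · simp [image_eq_zero_of_notMem_tsupport h₁]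
  calc tauOmega μ ω (convFun μ f₁ f₂)
      = ∫ g, ∫ h, f₁ h * f₂ (h⁻¹ * g) * ω g⁻¹ ∂μ ∂μ := by
        simp only [tauOmega, convFun, integral_mul_const]
    _ = ∫ h, ∫ g, f₁ h * f₂ (h⁻¹ * g) * ω g⁻¹ ∂μ ∂μ :=
        integral_integral_swap_of_hasCompactSupport hcont hsupp
    _ = ∫ h, f₁ h * ∫ x, f₂ x * ω (x⁻¹ * h⁻¹) ∂μ ∂μ := by
        congr 1 with h
        rw [← integral_mul_left_eq_self _ h, ← integral_const_mul]
        simp only [inv_mul_cancel_left, mul_inv_rev, mul_assoc]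

end General

section CosetIndicator

variable {G : Type*} [Group G] (U : Subgroup G)

def cosetIndicator (a : G) : G → ℂ := (a • (U : Set G)).indicator 1

open Classical in
lemma cosetIndicator_apply (a g : G) :
    cosetIndicator U a g = if (a : G ⧸ U) = g then 1 else 0 := by
  simp only [cosetIndicator, Set.indicator_apply, mem_leftCoset_iff, SetLike.mem_coe,
    QuotientGroup.eq, Pi.one_apply]

lemma conj_cosetIndicator (a g : G) : conj (cosetIndicator U a g) = cosetIndicator U a g := by
  rw [cosetIndicator_apply]; split_ifs <;> simp

lemma cosetIndicator_mul_inv_self (a h : G) :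
    cosetIndicator U a (a * h⁻¹) = (U : Set G).indicator 1 h := by
  classical
  simp [cosetIndicator_apply, QuotientGroup.eq, Set.indicator_apply]

lemma cosetIndicator_mul_right {u : G} (hu : u ∈ U) (a g : G) :
    cosetIndicator U a (g * u) = cosetIndicator U a g := by
  classical
  simp only [cosetIndicator_apply, QuotientGroup.mk_mul_of_mem g hu]

lemma apply_eq_apply_of_mk_eq {f : G → ℂ} (hf : ∀ g, ∀ u ∈ U, f (g * u) = f g) {a b : G}
    (hab : (a : G ⧸ U) = b) : f a = f b := by
  rw [← hf a _ (QuotientGroup.eq.mp hab), mul_inv_cancel_left]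

variable [TopologicalSpace G] [IsTopologicalGroup G]

lemma continuous_cosetIndicator (hUopen : IsOpen (U : Set G)) (a : G) :
    Continuous (cosetIndicator U a) :=
  IsClopen.continuous_indicator
    ⟨(U.isClosed_of_isOpen hUopen).smul a, hUopen.smul a⟩ continuous_const

lemma hasCompactSupport_cosetIndicator (hUcomp : IsCompact (U : Set G)) (a : G) :
    HasCompactSupport (cosetIndicator U a) :=
  HasCompactSupport.intro (hUcomp.smul a) fun _ hx => Set.indicator_of_notMem hx _

lemma hasCompactSupport_sum_smul_cosetIndicator (hUcomp : IsCompact (U : Set G)) {ι : Type*}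
    [Fintype ι] (s : ι → G) (c : ι → ℂ) :
    HasCompactSupport (∑ k, c k • cosetIndicator U (s k)) :=
  Finset.sum_induction _ HasCompactSupport (fun _ _ => HasCompactSupport.add)
    HasCompactSupport.zero fun k _ => (hasCompactSupport_cosetIndicator U hUcomp (s k)).smul_left

open Classical in
lemma exists_eq_sum_smul_cosetIndicator (hUopen : IsOpen (U : Set G)) {f : G → ℂ}
    (hf : HasCompactSupport f) (hinv : ∀ g, ∀ u ∈ U, f (g * u) = f g) :
    ∃ (m : ℕ) (s : Fin m → G) (c : Fin m → ℂ), f = ∑ k, c k • cosetIndicator U (s k) := by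
  have : DiscreteTopology (G ⧸ U) := QuotientGroup.discreteTopology hUopen
  have hQ : (QuotientGroup.mk '' tsupport f : Set (G ⧸ U)).Finite :=
    (hf.isCompact.image continuous_quotient_mk').finite_of_discrete
  set Q := hQ.toFinset
  refine ⟨Q.card, fun i => (Q.equivFin.symm i : G ⧸ U).out,
    fun i => f (Q.equivFin.symm i : G ⧸ U).out, ?_⟩
  funext g
  rw [Finset.sum_apply, Equiv.sum_comp Q.equivFin.symm
    (fun q : Q => (f (q : G ⧸ U).out • cosetIndicator U (q : G ⧸ U).out) g),
    Finset.sum_coe_sort Q (fun q => (f q.out • cosetIndicator U q.out) g)]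
  simp only [Pi.smul_apply, smul_eq_mul, cosetIndicator_apply, QuotientGroup.out_eq', mul_ite,
    mul_one, mul_zero, Finset.sum_ite_eq']
  split_ifs with hg
  · exact apply_eq_apply_of_mk_eq U hinv (QuotientGroup.out_eq' _).symm
  · by_contra hne
    exact hg (hQ.mem_toFinset.mpr ⟨g, subset_tsupport f hne, rfl⟩)

end CosetIndicator

section CosetIntegrals

variable {G : Type*} [Group G] [MeasurableSpace G] [MeasurableMul G] (U : Subgroup G)
  {μ : Measure G}

lemma integral_cosetIndicator_inv [μ.IsMulRightInvariant] (hU : MeasurableSet (U : Set G))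
    (a : G) : ∫ h, cosetIndicator U a h⁻¹ ∂μ = μ.real U := by
  rw [← integral_mul_right_eq_self _ a⁻¹]
  simp only [mul_inv_rev, inv_inv, cosetIndicator_mul_inv_self]
  simpa [Pi.one_def] using integral_indicator_const (μ := μ) (1 : ℂ) hU

lemma integral_cosetIndicator_mul_inv_mul [μ.IsMulLeftInvariant] (hU : MeasurableSet (U : Set G))
    {ω : G → ℂ} (hω : IsBiinvariant U ω) {a b y : G} (hy : y ∈ a • (U : Set G)) :
    ∫ x, cosetIndicator U b x * ω (x⁻¹ * y) ∂μ = μ.real U * ω (b⁻¹ * a) := by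
  have hbU : MeasurableSet (b • (U : Set G)) := hU.const_smul b
  calc ∫ x, cosetIndicator U b x * ω (x⁻¹ * y) ∂μ = ∫ x in b • (U : Set G), ω (x⁻¹ * y) ∂μ := by
        rw [← integral_indicator hbU]
        congr 1 with x
        by_cases hx : x ∈ b • (U : Set G) <;> simp [cosetIndicator, hx]
    _ = ∫ _ in b • (U : Set G), ω (b⁻¹ * a) ∂μ := setIntegral_congr_fun hbU fun x hx => by
        rw [mem_leftCoset_iff] at hx hy
        rw [show x⁻¹ * y = (b⁻¹ * x)⁻¹ * (b⁻¹ * a) * (a⁻¹ * y) by group]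
        exact hω _ _ (inv_mem hx) _ hy
    _ = μ.real U * ω (b⁻¹ * a) := by
        rw [setIntegral_const, Complex.real_smul, Measure.real, Measure.real, measure_smul]

end CosetIntegrals

section QuadraticForm

variable {G : Type*} [Group G] [TopologicalSpace G] [IsTopologicalGroup G] [MeasurableSpace G]
  [BorelSpace G] (U : Subgroup G) {μ : Measure G} [IsFiniteMeasureOnCompacts μ]
  [μ.IsMulLeftInvariant]

lemma integral_sum_smul_cosetIndicator_mul_inv_mul (hUcomp : IsCompact (U : Set G))
    (hUopen : IsOpen (U : Set G)) {ω : G → ℂ} (hωc : Continuous ω) (hω : IsBiinvariant U ω)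
    {ι : Type*} [Fintype ι] (s : ι → G) (c : ι → ℂ) {a y : G} (hy : y ∈ a • (U : Set G)) :
    ∫ x, (∑ k, c k • cosetIndicator U (s k)) x * ω (x⁻¹ * y) ∂μ =
      μ.real U * ∑ k, c k * ω ((s k)⁻¹ * a) := by
  have hχc := continuous_cosetIndicator U hUopen
  have hint (k : ι) : Integrable (fun x => cosetIndicator U (s k) x * ω (x⁻¹ * y)) μ :=
    Continuous.integrable_of_hasCompactSupport (by fun_prop)
      (hasCompactSupport_cosetIndicator U hUcomp (s k)).mul_right
  simp only [Finset.sum_apply, Pi.smul_apply, smul_eq_mul, Finset.sum_mul, mul_assoc]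
  rw [integral_finsetSum _ fun k _ => (hint k).const_mul _, Finset.mul_sum]
  refine Finset.sum_congr rfl fun k _ => ?_
  rw [integral_const_mul, integral_cosetIndicator_mul_inv_mul U hUopen.measurableSet hω hy]
  ring

lemma tauOmega_convFun_starFun_eq_sum [μ.IsMulRightInvariant] (hUcomp : IsCompact (U : Set G))
    (hUopen : IsOpen (U : Set G)) {ω : G → ℂ} (hωc : Continuous ω) (hω : IsBiinvariant U ω)
    {ι : Type*} [Fintype ι] (s : ι → G) (z : ι → ℂ) {f : G → ℂ}
    (hf : f = ∑ k, conj (z k) • cosetIndicator U (s k)) :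
    tauOmega μ ω (convFun μ (starFun f) f) =
      μ.real U ^ 2 * ∑ j, ∑ k, conj (z j) * z k * ω ((s j)⁻¹ * s k) := by
  have hχc := continuous_cosetIndicator U hUopen
  have hχs := hasCompactSupport_cosetIndicator U hUcomp
  have hf_apply (g : G) : f g = ∑ k, conj (z k) * cosetIndicator U (s k) g := by
    simp [hf]
  have hfc : Continuous f := by
    rw [funext hf_apply]
    fun_prop
  have hfs : HasCompactSupport f := hf ▸ hasCompactSupport_sum_smul_cosetIndicator U hUcomp s _
  have hstar (h : G) : starFun f h = ∑ j, z j * cosetIndicator U (s j) h⁻¹ := by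
    simp [starFun, hf_apply, conj_cosetIndicator]
  have hpoint (h : G) : starFun f h * ∫ x, f x * ω (x⁻¹ * h⁻¹) ∂μ =
      ∑ j, cosetIndicator U (s j) h⁻¹ *
        (z j * (μ.real U * ∑ k, conj (z k) * ω ((s k)⁻¹ * s j))) := by
    rw [hstar, Finset.sum_mul]
    refine Finset.sum_congr rfl fun j _ => ?_
    by_cases hh : h⁻¹ ∈ s j • (U : Set G)
    · rw [hf, integral_sum_smul_cosetIndicator_mul_inv_mul U hUcomp hUopen hωc hω s _ hh]
      ring
    · simp [cosetIndicator, hh]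
  have hint (j : ι) : Integrable (fun h => cosetIndicator U (s j) h⁻¹) μ :=
    Continuous.integrable_of_hasCompactSupport (by fun_prop)
      ((hχs (s j)).comp_homeomorph (Homeomorph.inv G))
  rw [tauOmega_convFun_eq_integral hfc.starFun hfc hωc hfs.starFun hfs]
  simp only [hpoint]
  rw [integral_finsetSum _ fun j _ => (hint j).mul_const _]
  simp only [integral_mul_const, integral_cosetIndicator_inv U hUopen.measurableSet]
  simp only [Finset.mul_sum]
  rw [Finset.sum_comm]
  exact Finset.sum_congr rfl fun _ _ => Finset.sum_congr rfl fun _ _ => by ring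

end QuadraticForm

theorem posDef_iff_tauOmega_nonneg_general {G : Type*} [Group G] [TopologicalSpace G]
    [IsTopologicalGroup G] [MeasurableSpace G] [BorelSpace G]
    (U : Subgroup G) (hUcomp : IsCompact (U : Set G)) (hUopen : IsOpen (U : Set G))
    (μ : Measure G) [μ.IsHaarMeasure] [μ.IsMulRightInvariant]
    (ω : G → ℂ) (hω : IsSpherical μ U ω) :
    IsPosDefFun ω ↔
      ∀ f : G → ℂ, HasCompactSupport f → (∀ (g : G), ∀ u ∈ U, f (g * u) = f g) →
        0 ≤ tauOmega μ ω (convFun μ (starFun f) f) := by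
  obtain ⟨hωc, -, hbi, -⟩ := hω
  have hμU : (0 : ℂ) < (μ.real U : ℂ) ^ 2 := by
    have := ENNReal.toReal_pos (hUopen.measure_ne_zero μ ⟨1, U.one_mem⟩) hUcomp.measure_lt_top.ne
    exact_mod_cast pow_pos this 2
  constructor
  · intro hpd f hf hinv
    obtain ⟨m, s, c, hfc⟩ := exists_eq_sum_smul_cosetIndicator U hUopen hf hinv
    rw [tauOmega_convFun_starFun_eq_sum U hUcomp hUopen hωc hbi s (fun k => conj (c k))
      (by simpa using hfc)]
    exact mul_nonneg hμU.le (hpd m s _)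
  · intro htau m s z
    set f := ∑ k, conj (z k) • cosetIndicator U (s k) with hf
    have hτ := htau f (hasCompactSupport_sum_smul_cosetIndicator U hUcomp s _)
      fun g u hu => by simp [hf, cosetIndicator_mul_right U hu]
    rw [tauOmega_convFun_starFun_eq_sum U hUcomp hUopen hωc hbi s z hf] at hτ
    simpa [hμU.ne'] using mul_nonneg (inv_nonneg.2 hμU.le) hτ

/-- For a Gelfand pair `(G,U)` and a `*`-spherical function `ω`, `ω` is
positive definite if and only if `τ_ω(f^* * f) ≥ 0` for every compactly supported
right-`U`-invariant function `f : G → ℂ`. -/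
theorem posDef_iff_tauOmega_nonneg {G : Type*} [Group G] [TopologicalSpace G]
    [IsTopologicalGroup G] [LocallyCompactSpace G] [T2Space G] [MeasurableSpace G] [BorelSpace G]
    (U : Subgroup G) (hUcomp : IsCompact (U : Set G)) (hUopen : IsOpen (U : Set G))
    (μ : Measure G) [μ.IsHaarMeasure] [μ.IsMulRightInvariant] (hU1 : μ (U : Set G) = 1)
    (hGelfand : IsGelfandPair μ U) (ω : G → ℂ) (hω : IsSpherical μ U ω)
    (hstar : ∀ g : G, ω g⁻¹ = (starRingEnd ℂ) (ω g)) :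
    IsPosDefFun ω ↔
      ∀ f : G → ℂ, HasCompactSupport f → (∀ (g : G), ∀ u ∈ U, f (g * u) = f g) →
        0 ≤ tauOmega μ ω (convFun μ (starFun f) f) :=
  posDef_iff_tauOmega_nonneg_general U hUcomp hUopen μ ω hω
end
end

section
/- Let 𝒢 be a topological group and N ⊆ 𝒢 a closed normal subgroup. Then the pair (𝒢, N) has property (T) if and only if the quotient group 𝒢/N has property (T). -/
/-!
The `N`-invariant vectors of a unitary representation of `𝒢` form a closed `𝒢`-invariant
subspace (by normality) on which `𝒢` acts through `𝒢/N`; `N`-invariant almost invariant vectors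
of `𝒢` are exactly almost invariant vectors of this representation of `𝒢/N`, since
`𝒢/N → (𝒢/N)/{e}` is a homeomorphism and so matches up the compact sets. Conversely a
representation of `𝒢/N` pulls back to a representation of `𝒢` in which every vector is
`N`-invariant, and images of compact sets under `𝒢 → 𝒢/N` are compact.
-/

noncomputable section

/-- A pair `(𝒢, ℋ)` consisting of a topological group `𝒢` and a subgroup `ℋ` has
*property (T)* if every unitary representation of `𝒢` (a strongly continuous homomorphism
into the unitary group of a complex Hilbert space) that has `ℋ`-invariant almost
`𝒢`-invariant vectors — i.e. for each `ε > 0` and each compact `Q ⊆ 𝒢/ℋ` there is an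
`ℋ`-invariant unit vector `ξ` with `‖π(g)ξ - ξ‖ < ε` for all `g` with `gℋ ∈ Q` — has a
nonzero `𝒢`-invariant vector. -/
def HasPropertyTPair (G : Type*) [Group G] [TopologicalSpace G] (H : Subgroup G) : Prop :=
  ∀ (E : Type) (_ : NormedAddCommGroup E) (_ : InnerProductSpace ℂ E) (_ : CompleteSpace E)
    (π : G →* (E ≃ₗᵢ[ℂ] E)),
    (∀ ξ : E, Continuous fun g : G => π g ξ) →
    (∀ ε : ℝ, 0 < ε → ∀ Q : Set (G ⧸ H), IsCompact Q →
      ∃ ξ : E, ‖ξ‖ = 1 ∧ (∀ h ∈ H, π h ξ = ξ) ∧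
        ∀ g : G, (QuotientGroup.mk g : G ⧸ H) ∈ Q → ‖π g ξ - ξ‖ < ε) →
    ∃ ξ : E, ξ ≠ 0 ∧ ∀ g : G, π g ξ = ξ

theorem QuotientGroup.isHomeomorph_mk_bot {G : Type*} [Group G] [TopologicalSpace G] :
    IsHomeomorph (QuotientGroup.mk : G → G ⧸ (⊥ : Subgroup G)) := by
  refine isHomeomorph_iff_isQuotientMap_injective.mpr ⟨QuotientGroup.isQuotientMap_mk ⊥, ?_⟩
  intro a b hab
  simpa [Subgroup.mem_bot, inv_mul_eq_one] using QuotientGroup.eq.mp hab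

section FixedVectors

variable {G R E : Type*} [Group G] [Ring R] [NormedAddCommGroup E] [Module R E]
  (π : G →* (E ≃ₗᵢ[R] E))

theorem apply_apply_eq_mul (a b : G) (x : E) : π a (π b x) = π (a * b) x := by
  rw [map_mul]
  rfl

def fixedSubmodule (H : Subgroup G) : Submodule R E where
  carrier := {x | ∀ h ∈ H, π h x = x}
  zero_mem' _ _ := map_zero (π _)
  add_mem' ha hb h hh := by rw [map_add, ha h hh, hb h hh]
  smul_mem' c x hx h hh := by rw [map_smul, hx h hh]

theorem isClosed_fixedSubmodule (H : Subgroup G) : IsClosed (fixedSubmodule π H : Set E) := by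
  have : (fixedSubmodule π H : Set E) = ⋂ h ∈ H, {x | π h x = x} := by
    ext x
    simp [fixedSubmodule]
  rw [this]
  exact isClosed_biInter fun h _ => isClosed_eq (π h).continuous continuous_id

variable (N : Subgroup G) [N.Normal]

theorem apply_mem_fixedSubmodule (g : G) {x : E} (hx : x ∈ fixedSubmodule π N) :
    π g x ∈ fixedSubmodule π N := by
  intro h hh
  have hconj : g⁻¹ * h * g ∈ N := ‹N.Normal›.conj_mem' h hh g
  calc π h (π g x) = π g (π (g⁻¹ * h * g) x) := by
        rw [apply_apply_eq_mul, apply_apply_eq_mul, ← mul_assoc, mul_inv_cancel_left]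
    _ = π g x := by rw [hx _ hconj]

theorem map_fixedSubmodule (g : G) :
    (fixedSubmodule π N).map ((π g).toLinearEquiv : E →ₗ[R] E) = fixedSubmodule π N := by
  refine le_antisymm ?_ fun x hx => ⟨π g⁻¹ x, apply_mem_fixedSubmodule π N g⁻¹ hx, ?_⟩
  · rintro _ ⟨x, hx, rfl⟩
    exact apply_mem_fixedSubmodule π N g hx
  · change π g (π g⁻¹ x) = x
    rw [apply_apply_eq_mul, mul_inv_cancel, map_one]
    rfl

def restrictFixed : G →* (fixedSubmodule π N ≃ₗᵢ[R] fixedSubmodule π N) where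
  toFun g :=
    { toLinearEquiv := (π g).toLinearEquiv.ofSubmodules _ _ (map_fixedSubmodule π N g)
      norm_map' := fun x => (π g).norm_map x }
  map_one' := by ext; simp
  map_mul' a b := by
    ext x
    exact (apply_apply_eq_mul π a b x).symm

theorem le_ker_restrictFixed : N ≤ (restrictFixed π N).ker := fun h hh => by
  ext x
  exact x.2 h hh

end FixedVectors

namespace HasPropertyTPair

variable {G : Type*} [Group G] [TopologicalSpace G] {N : Subgroup G} [N.Normal]

theorem quotient (hT : HasPropertyTPair G N) : HasPropertyTPair (G ⧸ N) ⊥ := by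
  intro E _ _ _ σ hcont halmost
  obtain ⟨ξ, hξ0, hξ⟩ := hT E inferInstance inferInstance inferInstance
    (σ.comp (QuotientGroup.mk' N))
    (fun ξ => (hcont ξ).comp QuotientGroup.continuous_mk) fun ε hε Q hQ => by
      obtain ⟨ξ, hξ1, -, hξ⟩ := halmost ε hε _ (hQ.image QuotientGroup.continuous_mk)
      refine ⟨ξ, hξ1, fun h hh => ?_, fun g hg => hξ _ ⟨_, hg, rfl⟩⟩
      simp [(QuotientGroup.eq_one_iff h).mpr hh]
  exact ⟨ξ, hξ0, QuotientGroup.mk_surjective.forall.mpr hξ⟩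

theorem of_quotient (hT : HasPropertyTPair (G ⧸ N) ⊥) : HasPropertyTPair G N := by
  intro E _ _ _ π hcont halmost
  set F := fixedSubmodule π N
  have : CompleteSpace F := (isClosed_fixedSubmodule π N).completeSpace_coe
  let σ := QuotientGroup.lift N (restrictFixed π N) (le_ker_restrictFixed π N)
  have hσ (g : G) (x : F) : (σ g x : E) = π g x := rfl
  obtain ⟨η, hη0, hη⟩ := hT F inferInstance inferInstance inferInstance σ
    (fun ξ => (QuotientGroup.isQuotientMap_mk N).continuous_iff.mpr
      ((hcont ξ).subtype_mk _))
    fun ε hε Q hQ => by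
      obtain ⟨ξ, hξ1, hξN, hξ⟩ := halmost ε hε _
        (QuotientGroup.isHomeomorph_mk_bot.isProperMap.isCompact_preimage hQ)
      exact ⟨⟨ξ, hξN⟩, hξ1, fun h hh => by simp [Subgroup.mem_bot.mp hh],
        QuotientGroup.mk_surjective.forall.mpr hξ⟩
  exact ⟨η, by simpa using hη0, fun g => by simpa [hσ] using congrArg Subtype.val (hη g)⟩

end HasPropertyTPair

theorem hasPropertyTPair_normal_iff_quotient_T_general {G : Type*} [Group G] [TopologicalSpace G]
    (N : Subgroup G) [N.Normal] :
    HasPropertyTPair G N ↔ HasPropertyTPair (G ⧸ N) (⊥ : Subgroup (G ⧸ N)) :=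
  ⟨HasPropertyTPair.quotient, HasPropertyTPair.of_quotient⟩

/-- For a closed normal subgroup `N` of a topological group `𝒢`, the pair
`(𝒢, N)` has property (T) if and only if the quotient group `𝒢/N` has property (T) (i.e.
the pair `(𝒢/N, {e})` has property (T)). -/
theorem hasPropertyTPair_normal_iff_quotient_T {G : Type*} [Group G] [TopologicalSpace G]
    [IsTopologicalGroup G] (N : Subgroup G) [N.Normal] (hNclosed : IsClosed (N : Set G)) :
    HasPropertyTPair G N ↔ HasPropertyTPair (G ⧸ N) (⊥ : Subgroup (G ⧸ N)) :=
  hasPropertyTPair_normal_iff_quotient_T_general N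
end
end

section
/- Let 𝒢 be a topological group and H ⊆ 𝒢 a compact subgroup. Then 𝒢 has property (T) if and only if the pair (𝒢, H) has property (T). -/
/-!
Property (T) for `(G, ⊥)` passes to `(G, H)` for every subgroup `H`, since `H`-invariant vectors
are invariant under `⊥` and compact subsets of `G` map onto compact subsets of `G ⧸ H`.

Conversely, since `G → G ⧸ H` is proper, a compact `Q ⊆ G ⧸ H` lifts to a compact subset of `G`,
which we enlarge by `H`. Take a unit vector `ξ` moved by less than `δ` on that set. The closed
convex hull of the orbit `π(H)ξ` lies in the `δ`-ball around `ξ` and is `π(H)`-stable, so its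
unique point of minimal norm is `H`-invariant and close to `ξ`; normalised, it is an `H`-invariant
unit vector that is almost invariant on `Q`.
-/

noncomputable section

open Set

theorem QuotientGroup.isProperMap_mk {G : Type*} [Group G] [TopologicalSpace G]
    [IsTopologicalGroup G] {H : Subgroup G} (hH : IsCompact (H : Set G)) :
    IsProperMap (QuotientGroup.mk : G → G ⧸ H) := by
  refine isProperMap_iff_isClosedMap_and_compact_fibers.2
    ⟨continuous_mk, isClosedMap_coe hH, fun y => ?_⟩
  obtain ⟨g, rfl⟩ := mk_surjective y
  rw [← image_singleton, preimage_image_mk_eq_mul]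
  exact isCompact_singleton.mul hH

theorem eq_of_norm_sub_eq_iInf_of_convex {F : Type*} [NormedAddCommGroup F]
    [InnerProductSpace ℝ F] {K : Set F} (hK : Convex ℝ K) {u v w : F} (hv : v ∈ K) (hw : w ∈ K)
    (hvmin : ‖u - v‖ = ⨅ x : K, ‖u - x‖) (hwmin : ‖u - w‖ = ⨅ x : K, ‖u - x‖) : v = w := by
  have hv' := (norm_eq_iInf_iff_real_inner_le_zero hK hv).1 hvmin w hw
  have hw' := (norm_eq_iInf_iff_real_inner_le_zero hK hw).1 hwmin v hv
  have hsq : ‖v - w‖ ^ 2 ≤ 0 := by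
    calc ‖v - w‖ ^ 2 = inner ℝ ((u - w) - (u - v)) (v - w) := by
          rw [sub_sub_sub_cancel_left, real_inner_self_eq_norm_sq]
      _ = inner ℝ (u - w) (v - w) + inner ℝ (u - v) (w - v) := by
          rw [inner_sub_left, sub_eq_add_neg, ← inner_neg_right, neg_sub]
      _ ≤ 0 := add_nonpos hw' hv'
  rw [← sub_eq_zero, ← norm_eq_zero]
  nlinarith [norm_nonneg (v - w)]

theorem LinearIsometryEquiv.norm_map_sub_self_le {R E : Type*} [Semiring R]
    [SeminormedAddCommGroup E] [Module R E] (T : E ≃ₗᵢ[R] E) (c ξ : E) :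
    ‖T c - c‖ ≤ ‖T ξ - ξ‖ + 2 * ‖c - ξ‖ := by
  calc ‖T c - c‖ = ‖T (c - ξ) + (T ξ - ξ) + (ξ - c)‖ := by rw [map_sub]; abel_nf
    _ ≤ ‖T (c - ξ)‖ + ‖T ξ - ξ‖ + ‖ξ - c‖ := norm_add₃_le
    _ = ‖T ξ - ξ‖ + 2 * ‖c - ξ‖ := by rw [T.norm_map, norm_sub_rev ξ c]; ring

section InvariantVectors

variable {𝕜 E G : Type*} [RCLike 𝕜] [NormedAddCommGroup E] [InnerProductSpace 𝕜 E] [Group G]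

theorem exists_invariant_near_of_orbit_near [CompleteSpace E] (π : G →* (E ≃ₗᵢ[𝕜] E))
    (H : Subgroup G) {ξ : E} {δ : ℝ} (hξ : ∀ h ∈ H, ‖π h ξ - ξ‖ ≤ δ) :
    ∃ c : E, ‖c - ξ‖ ≤ δ ∧ ∀ h ∈ H, π h c = c := by
  let _ : InnerProductSpace ℝ E := InnerProductSpace.rclikeToReal 𝕜 E
  set C := closedConvexHull ℝ (range fun h : H => π h ξ)
  have hC : Convex ℝ C := convex_closedConvexHull
  have hstable : ∀ h ∈ H, MapsTo (π h) C C := by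
    intro h hh
    refine closedConvexHull_min ?_ (hC.linear_preimage ((π h).toLinearMap.restrictScalars ℝ))
      (isClosed_closedConvexHull.preimage (π h).continuous)
    rintro _ ⟨h', rfl⟩
    refine subset_closedConvexHull ⟨⟨h, hh⟩ * h', ?_⟩
    simp
  have hξC : ξ ∈ C := subset_closedConvexHull ⟨1, by simp⟩
  obtain ⟨c, hcC, hcmin⟩ :=
    exists_norm_eq_iInf_of_complete_convex ⟨ξ, hξC⟩ isClosed_closedConvexHull.isComplete hC 0
  refine ⟨c, ?_, fun h hh => ?_⟩
  · have hball : C ⊆ Metric.closedBall ξ δ := by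
      refine closedConvexHull_min ?_ (convex_closedBall ξ δ) Metric.isClosed_closedBall
      rintro _ ⟨h, rfl⟩
      simpa [dist_eq_norm] using hξ h h.2
    simpa [dist_eq_norm] using hball hcC
  · refine eq_of_norm_sub_eq_iInf_of_convex hC (hstable h hh hcC) hcC ?_ hcmin
    simpa using hcmin

theorem exists_unit_invariant_near [CompleteSpace E] (π : G →* (E ≃ₗᵢ[𝕜] E))
    (H : Subgroup G) {ξ : E} (hξ : ‖ξ‖ = 1) {δ : ℝ} (hδ : δ ≤ 1 / 2)
    (hξH : ∀ h ∈ H, ‖π h ξ - ξ‖ ≤ δ) :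
    ∃ η : E, ‖η‖ = 1 ∧ (∀ h ∈ H, π h η = η) ∧
      ∀ g : G, ‖π g η - η‖ ≤ 2 * (‖π g ξ - ξ‖ + 2 * δ) := by
  obtain ⟨c, hcξ, hcH⟩ := exists_invariant_near_of_orbit_near π H hξH
  have hc : 1 / 2 ≤ ‖c‖ := by
    have := norm_sub_norm_le ξ c
    rw [hξ, norm_sub_rev] at this
    linarith
  have hc0 : c ≠ 0 := norm_pos_iff.1 (by linarith)
  refine ⟨(‖c‖⁻¹ : 𝕜) • c, norm_smul_inv_norm hc0, fun h hh => by rw [map_smul, hcH h hh],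
    fun g => ?_⟩
  rw [map_smul, ← smul_sub, norm_smul, norm_inv, RCLike.norm_ofReal, abs_norm]
  calc ‖c‖⁻¹ * ‖π g c - c‖ ≤ 2 * ‖π g c - c‖ := by
        gcongr
        rw [inv_le_comm₀ (by linarith) two_pos]
        linarith
    _ ≤ 2 * (‖π g ξ - ξ‖ + 2 * δ) := by
        gcongr
        linarith [(π g).norm_map_sub_self_le c ξ]

end InvariantVectors

namespace HasPropertyTPair

variable {G : Type*} [Group G] [TopologicalSpace G]

theorem mono {K H : Subgroup G} (hKH : K ≤ H) (hK : HasPropertyTPair G K) :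
    HasPropertyTPair G H := by
  intro E _ _ hE π hcont halmost
  refine hK E _ _ hE π hcont fun ε hε Q hQ => ?_
  have hmap : Continuous (Subgroup.quotientMapOfLE hKH) := by
    rw [(QuotientGroup.isQuotientMap_mk K).continuous_iff]
    exact QuotientGroup.continuous_mk
  obtain ⟨ξ, hξ, hξH, hξQ⟩ := halmost ε hε _ (hQ.image hmap)
  exact ⟨ξ, hξ, fun h hh => hξH h (hKH hh), fun g hg => hξQ g ⟨_, hg, rfl⟩⟩

theorem bot_of_isCompact [IsTopologicalGroup G] {H : Subgroup G} (hH : IsCompact (H : Set G))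
    (hT : HasPropertyTPair G H) : HasPropertyTPair G ⊥ := by
  intro E _ _ hE π hcont halmost
  refine hT E _ _ hE π hcont fun ε hε Q hQ => ?_
  set δ := min (ε / 7) (1 / 2)
  have hδ : 0 < δ := lt_min (by linarith) one_half_pos
  set K := (QuotientGroup.mk : G → G ⧸ H) ⁻¹' Q ∪ H
  have hK : IsCompact K := ((QuotientGroup.isProperMap_mk hH).isCompact_preimage hQ).union hH
  obtain ⟨ξ, hξ, -, hξK⟩ := halmost δ hδ _ (hK.image QuotientGroup.continuous_mk)
  have hξK' : ∀ g ∈ K, ‖π g ξ - ξ‖ < δ := fun g hg => hξK g ⟨g, hg, rfl⟩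
  obtain ⟨η, hη, hηH, hηG⟩ := exists_unit_invariant_near π H hξ (min_le_right _ _)
    fun h hh => (hξK' h (Or.inr hh)).le
  refine ⟨η, hη, hηH, fun g hg => (hηG g).trans_lt ?_⟩
  linarith [hξK' g (Or.inl hg), min_le_left (ε / 7) (1 / 2)]

end HasPropertyTPair

/-- For a compact subgroup `H` of a topological group `𝒢`, the group `𝒢`
has property (T) (i.e. the pair `(𝒢, {e})` has property (T)) if and only if the pair
`(𝒢, H)` has property (T). -/
theorem group_T_iff_hasPropertyTPair_compact {G : Type*} [Group G] [TopologicalSpace G]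
    [IsTopologicalGroup G] (H : Subgroup G) (hHcompact : IsCompact (H : Set G)) :
    HasPropertyTPair G (⊥ : Subgroup G) ↔ HasPropertyTPair G H :=
  ⟨HasPropertyTPair.mono bot_le, HasPropertyTPair.bot_of_isCompact hHcompact⟩

end
end
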